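/- The Jacobian of the discretized Euler-Heun one-step map M_h: ℝ^N → ℝ^N at any Y is invertible if and only if ∂/∂Y₁ of the last component, namely (h/2)·∂₂f(t,Y_N,Y₁,u)·(1 + h·∂₁f(t+h,Y_N+hf(t,Y_N,Y₁,u),Y₂,u)), is nonzero; in particular for h sufficiently small and ∂₂f(t,Y_N,Y₁,u) ≠ 0 the map is a local diffeomorphism. -/

import Mathlib

open ContinuousLinearMap


lemma euler_heun_lin_comb (D : (ℝ × ℝ × ℝ × ℝ) →L[ℝ] ℝ) (x y : ℝ) :
    D (0, x, y, 0) = x * D (0, 1, 0, 0) + y * D (0, 0, 1, 0) := by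
  have hxy : ((0, x, y, 0) : ℝ × ℝ × ℝ × ℝ)
      = x • ((0, 1, 0, 0) : ℝ × ℝ × ℝ × ℝ) + y • ((0, 0, 1, 0) : ℝ × ℝ × ℝ × ℝ) := by
    simp [Prod.ext_iff]
  rw [hxy, map_add, map_smul, map_smul, smul_eq_mul, smul_eq_mul]

lemma euler_heun_slice3 (f : ℝ → ℝ → ℝ → ℝ → ℝ)
    (hf : Differentiable ℝ (fun p : ℝ × ℝ × ℝ × ℝ => f p.1 p.2.1 p.2.2.1 p.2.2.2))
    (a b c d : ℝ) :
    HasDerivAt (fun z => f a b z d)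
      (fderiv ℝ (fun p : ℝ × ℝ × ℝ × ℝ => f p.1 p.2.1 p.2.2.1 p.2.2.2) (a, b, c, d)
        (0, 0, 1, 0)) c := by
  have hinner : HasDerivAt (fun z : ℝ => ((a, b, z, d) : ℝ × ℝ × ℝ × ℝ))
      ((0, 0, 1, 0) : ℝ × ℝ × ℝ × ℝ) c :=
    HasDerivAt.prodMk (hasDerivAt_const c a) (HasDerivAt.prodMk (hasDerivAt_const c b)
      (HasDerivAt.prodMk (hasDerivAt_id c) (hasDerivAt_const c d)))
  exact (hf (a, b, c, d)).hasFDerivAt.comp_hasDerivAt c hinner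

lemma euler_heun_slice2 (f : ℝ → ℝ → ℝ → ℝ → ℝ)
    (hf : Differentiable ℝ (fun p : ℝ × ℝ × ℝ × ℝ => f p.1 p.2.1 p.2.2.1 p.2.2.2))
    (a b c d : ℝ) :
    HasDerivAt (fun z => f a z c d)
      (fderiv ℝ (fun p : ℝ × ℝ × ℝ × ℝ => f p.1 p.2.1 p.2.2.1 p.2.2.2) (a, b, c, d)
        (0, 1, 0, 0)) b := by
  have hinner : HasDerivAt (fun z : ℝ => ((a, z, c, d) : ℝ × ℝ × ℝ × ℝ))
      ((0, 1, 0, 0) : ℝ × ℝ × ℝ × ℝ) b :=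
    HasDerivAt.prodMk (hasDerivAt_const b a) (HasDerivAt.prodMk (hasDerivAt_id b)
      (HasDerivAt.prodMk (hasDerivAt_const b c) (hasDerivAt_const b d)))
  exact (hf (a, b, c, d)).hasFDerivAt.comp_hasDerivAt b hinner

lemma euler_heun_shift_bij (N : ℕ) (hN : 1 < N) (α ε γ : ℝ)
    (L : (Fin N → ℝ) →L[ℝ] (Fin N → ℝ))
    (hL1 : ∀ (v : Fin N → ℝ) (i : Fin N) (hi : (i : ℕ) + 1 < N), L v i = v ⟨(i : ℕ) + 1, hi⟩)
    (hL2 : ∀ v : Fin N → ℝ, L v ⟨N - 1, by omega⟩ =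
      α * v ⟨N - 1, by omega⟩ + ε * v ⟨0, by omega⟩ + γ * v ⟨1, by omega⟩) :
    Function.Bijective L ↔ ε ≠ 0 := by
  constructor
  · intro hbij hε
    subst hε
    set v : Fin N → ℝ := Pi.single ⟨0, by omega⟩ 1 with hv
    have hLv : L v = 0 := by
      funext i
      by_cases hi : (i : ℕ) + 1 < N
      · rw [hL1 v i hi]
        have : (⟨(i : ℕ) + 1, hi⟩ : Fin N) ≠ ⟨0, by omega⟩ := by
          simp [Fin.ext_iff]
        simp [hv, Pi.single_eq_of_ne this]
      · have hieq : i = ⟨N - 1, by omega⟩ := by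
          have h' := i.isLt
          apply Fin.ext
          show (i : ℕ) = N - 1
          omega
        rw [hieq, hL2 v]
        have h1 : v ⟨N - 1, by omega⟩ = 0 := by
          have : (⟨N - 1, by omega⟩ : Fin N) ≠ ⟨0, by omega⟩ := by
            simp [Fin.ext_iff]; omega
          simp [hv, Pi.single_eq_of_ne this]
        have h2 : v ⟨1, by omega⟩ = 0 := by
          have : (⟨1, by omega⟩ : Fin N) ≠ ⟨0, by omega⟩ := by
            simp [Fin.ext_iff]
          simp [hv, Pi.single_eq_of_ne this]
        rw [h1, h2]; ring_nf; rfl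
    have hv0 : v = 0 := hbij.1 (by rw [hLv, map_zero])
    have : v ⟨0, by omega⟩ = 1 := by simp [hv]
    rw [hv0] at this
    simpa using this
  · intro hε
    have hinj : Function.Injective L := by
      rw [injective_iff_map_eq_zero]
      intro v hv
      have key : ∀ j : Fin N, (j : ℕ) ≠ 0 → v j = 0 := by
        intro j hj
        obtain ⟨k, hk⟩ : ∃ k, (j : ℕ) = k + 1 := ⟨(j : ℕ) - 1, by omega⟩
        have hkN : k + 1 < N := hk ▸ j.isLt
        have := congrFun hv ⟨k, by omega⟩
        rw [hL1 v ⟨k, by omega⟩ hkN] at this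
        have hje : j = ⟨k + 1, hkN⟩ := Fin.ext hk
        rw [hje]; exact this
      have hlast := congrFun hv ⟨N - 1, by omega⟩
      rw [hL2 v] at hlast
      have h1 : v ⟨N - 1, by omega⟩ = 0 := key _ (by simp; omega)
      have h2 : v ⟨1, by omega⟩ = 0 := key _ (by simp)
      rw [h1, h2] at hlast
      have h0 : v ⟨0, by omega⟩ = 0 := by
        have : ε * v ⟨0, by omega⟩ = 0 := by
          have : (0 : ℝ) = α * 0 + ε * v ⟨0, by omega⟩ + γ * 0 := hlast.symm
          linarith
        exact (mul_eq_zero.mp this).resolve_left hε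
      funext j
      by_cases hj : (j : ℕ) = 0
      · have : j = ⟨0, by omega⟩ := Fin.ext hj
        rw [this]; exact h0
      · exact key j hj
    exact ⟨hinj, LinearMap.injective_iff_surjective.mp hinj⟩

/-- The Jacobian of the Euler–Heun one-step map M_h at Y is invertible iff its (N,1)
entry (h/2)·∂₂f(t,Y_N,Y₁,u)·(1 + h·∂₁f(t+h,Y_N+hf(t,Y_N,Y₁,u),Y₂,u)) is nonzero;
in particular, if ∂₂f(t,Y_N,Y₁,u) ≠ 0 then for all sufficiently small h > 0 the
derivative of M_h at Y is invertible, so M_h is a local diffeomorphism at Y. -/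
theorem euler_heun_step_jacobian (N : ℕ) (hN : 2 ≤ N) (t u : ℝ)
    (f : ℝ → ℝ → ℝ → ℝ → ℝ)
    (hf : ContDiff ℝ (⊤ : ℕ∞) (fun p : ℝ × ℝ × ℝ × ℝ => f p.1 p.2.1 p.2.2.1 p.2.2.2)) :
    let iN : Fin N := ⟨N - 1, by omega⟩
    let i1 : Fin N := ⟨0, by omega⟩
    let i2 : Fin N := ⟨1, by omega⟩
    let M : ℝ → (Fin N → ℝ) → (Fin N → ℝ) := fun h Y => fun i : Fin N =>
      if hi : (i : ℕ) + 1 < N then Y ⟨(i : ℕ) + 1, hi⟩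
      else
        Y iN + h * (f t (Y iN) (Y i1) u +
          f (t + h) (Y iN + h * f t (Y iN) (Y i1) u) (Y i2) u) / 2
    let E : ℝ → (Fin N → ℝ) → ℝ := fun h Y =>
      (h / 2) * deriv (fun z => f t (Y iN) z u) (Y i1) *
        (1 + h * deriv (fun z => f (t + h) z (Y i2) u)
          (Y iN + h * f t (Y iN) (Y i1) u))
    (∀ (h : ℝ) (Y : Fin N → ℝ),
      Function.Bijective (fderiv ℝ (M h) Y) ↔ E h Y ≠ 0) ∧
    (∀ Y : Fin N → ℝ, deriv (fun z => f t (Y iN) z u) (Y i1) ≠ 0 →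
      ∃ h₀ > (0 : ℝ), ∀ h : ℝ, 0 < h → h < h₀ →
        Function.Bijective (fderiv ℝ (M h) Y)) := by
  intro iN i1 i2 M E
  set F : ℝ × ℝ × ℝ × ℝ → ℝ := fun p => f p.1 p.2.1 p.2.2.1 p.2.2.2 with hFdef
  have hFd : Differentiable ℝ F := hf.differentiable (by simp)
  -- the main step: compute the derivative of M h at Y and characterize bijectivity
  have part1 : ∀ (h : ℝ) (Y : Fin N → ℝ),
      Function.Bijective (fderiv ℝ (M h) Y) ↔ E h Y ≠ 0 := by
    intro h Y
    set D0 : (ℝ × ℝ × ℝ × ℝ) →L[ℝ] ℝ := fderiv ℝ F (t, Y iN, Y i1, u) with hD0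
    set pa : ℝ := D0 (0, 1, 0, 0) with hpa
    set pb : ℝ := D0 (0, 0, 1, 0) with hpb
    set DE : (ℝ × ℝ × ℝ × ℝ) →L[ℝ] ℝ :=
      fderiv ℝ F (t + h, Y iN + h * f t (Y iN) (Y i1) u, Y i2, u) with hDE
    set qa : ℝ := DE (0, 1, 0, 0) with hqa
    set qc : ℝ := DE (0, 0, 1, 0) with hqc
    -- the candidate derivative
    set L : (Fin N → ℝ) →L[ℝ] (Fin N → ℝ) := ContinuousLinearMap.pi
      (fun i : Fin N => if hi : (i : ℕ) + 1 < N then proj (⟨(i : ℕ) + 1, hi⟩ : Fin N)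
        else (1 + h * (pa + qa * (1 + h * pa)) / 2) • proj iN
          + (h / 2 * pb * (1 + h * qa)) • proj i1 + (h / 2 * qc) • proj i2) with hL
    -- inner affine maps
    have hP1 : HasFDerivAt (fun Y : Fin N → ℝ => ((t, Y iN, Y i1, u) : ℝ × ℝ × ℝ × ℝ))
        ((0 : (Fin N → ℝ) →L[ℝ] ℝ).prod ((proj iN).prod ((proj i1).prod 0))) Y :=
      HasFDerivAt.prodMk (hasFDerivAt_const t Y) (HasFDerivAt.prodMk (hasFDerivAt_apply iN Y)
        (HasFDerivAt.prodMk (hasFDerivAt_apply i1 Y) (hasFDerivAt_const u Y)))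
    have hA : HasFDerivAt (fun Y : Fin N → ℝ => f t (Y iN) (Y i1) u)
        (D0.comp ((0 : (Fin N → ℝ) →L[ℝ] ℝ).prod ((proj iN).prod ((proj i1).prod 0)))) Y :=
      ((hFd (t, Y iN, Y i1, u)).hasFDerivAt.comp Y hP1 :)
    have hB : HasFDerivAt (fun Y : Fin N → ℝ => Y iN + h * f t (Y iN) (Y i1) u)
        (proj iN + h • (D0.comp ((0 : (Fin N → ℝ) →L[ℝ] ℝ).prod
          ((proj iN).prod ((proj i1).prod 0))))) Y :=
      (hasFDerivAt_apply iN Y).add (hA.const_mul h)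
    have hP2 : HasFDerivAt (fun Y : Fin N → ℝ =>
        ((t + h, Y iN + h * f t (Y iN) (Y i1) u, Y i2, u) : ℝ × ℝ × ℝ × ℝ))
        ((0 : (Fin N → ℝ) →L[ℝ] ℝ).prod ((proj iN + h • (D0.comp
          ((0 : (Fin N → ℝ) →L[ℝ] ℝ).prod ((proj iN).prod ((proj i1).prod 0))))).prod
          ((proj i2).prod 0))) Y :=
      HasFDerivAt.prodMk (hasFDerivAt_const (t + h) Y) (HasFDerivAt.prodMk hB
        (HasFDerivAt.prodMk (hasFDerivAt_apply i2 Y) (hasFDerivAt_const u Y)))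
    have hC : HasFDerivAt (fun Y : Fin N → ℝ =>
        f (t + h) (Y iN + h * f t (Y iN) (Y i1) u) (Y i2) u)
        (DE.comp ((0 : (Fin N → ℝ) →L[ℝ] ℝ).prod ((proj iN + h • (D0.comp
          ((0 : (Fin N → ℝ) →L[ℝ] ℝ).prod ((proj iN).prod ((proj i1).prod 0))))).prod
          ((proj i2).prod 0)))) Y :=
      ((hFd (t + h, Y iN + h * f t (Y iN) (Y i1) u, Y i2, u)).hasFDerivAt.comp Y hP2 :)
    have hMder : HasFDerivAt (M h) L Y := by
      apply hasFDerivAt_pi''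
      intro i
      rw [ContinuousLinearMap.proj_pi]
      by_cases hi : (i : ℕ) + 1 < N
      · simp only [M, dif_pos hi]
        exact hasFDerivAt_apply (⟨(i : ℕ) + 1, hi⟩ : Fin N) Y
      · simp only [M, dif_neg hi]
        have hD : HasFDerivAt (fun Y : Fin N → ℝ =>
            Y iN + h * (f t (Y iN) (Y i1) u +
              f (t + h) (Y iN + h * f t (Y iN) (Y i1) u) (Y i2) u) / 2)
            (proj iN + (2⁻¹ : ℝ) • (h • (D0.comp ((0 : (Fin N → ℝ) →L[ℝ] ℝ).prod
              ((proj iN).prod ((proj i1).prod 0))) + DE.comp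
              ((0 : (Fin N → ℝ) →L[ℝ] ℝ).prod ((proj iN + h • (D0.comp
                ((0 : (Fin N → ℝ) →L[ℝ] ℝ).prod ((proj iN).prod ((proj i1).prod 0))))).prod
                ((proj i2).prod 0)))))) Y :=
          (hasFDerivAt_apply iN Y).add (((hA.add hC).const_mul h).mul_const (2⁻¹ : ℝ))
        refine hD.congr_fderiv ?_
        ext v
        simp only [ContinuousLinearMap.add_apply, ContinuousLinearMap.coe_comp',
          Function.comp_apply, ContinuousLinearMap.smul_apply,
          ContinuousLinearMap.prod_apply, ContinuousLinearMap.zero_apply,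
          ContinuousLinearMap.proj_apply, smul_eq_mul]
        rw [euler_heun_lin_comb D0 (v iN) (v i1),
          euler_heun_lin_comb DE (v iN + h * (v iN * D0 (0, 1, 0, 0) + v i1 * D0 (0, 0, 1, 0)))
            (v i2)]
        simp only [← hpa, ← hpb, ← hqa, ← hqc]
        ring
    rw [hMder.fderiv]
    have hbij : Function.Bijective L ↔ (h / 2 * pb * (1 + h * qa)) ≠ 0 := by
      apply euler_heun_shift_bij N hN (1 + h * (pa + qa * (1 + h * pa)) / 2)
        (h / 2 * pb * (1 + h * qa)) (h / 2 * qc) L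
      · intro v i hi
        simp only [hL, ContinuousLinearMap.pi_apply, dif_pos hi,
          ContinuousLinearMap.proj_apply]
      · intro v
        have hiN : (⟨N - 1, by omega⟩ : Fin N) = iN := rfl
        have h1 : (⟨0, by omega⟩ : Fin N) = i1 := rfl
        have h2 : (⟨1, by omega⟩ : Fin N) = i2 := rfl
        have hni : ¬ ((iN : ℕ) + 1 < N) := by
          show ¬ (N - 1 + 1 < N); omega
        rw [hiN, h1, h2]
        simp only [hL, ContinuousLinearMap.pi_apply, dif_neg hni,
          ContinuousLinearMap.add_apply, ContinuousLinearMap.smul_apply,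
          ContinuousLinearMap.proj_apply, smul_eq_mul]
    rw [hbij]
    have e1 : deriv (fun z => f t (Y iN) z u) (Y i1) = pb :=
      (euler_heun_slice3 f hFd t (Y iN) (Y i1) u).deriv
    have e2 : deriv (fun z => f (t + h) z (Y i2) u)
        (Y iN + h * f t (Y iN) (Y i1) u) = qa :=
      (euler_heun_slice2 f hFd (t + h) (Y iN + h * f t (Y iN) (Y i1) u) (Y i2) u).deriv
    have hE : E h Y = h / 2 * pb * (1 + h * qa) := by
      simp only [E, e1, e2]
    rw [hE]
  refine ⟨part1, ?_⟩
  intro Y hder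
  have e1 : deriv (fun z => f t (Y iN) z u) (Y i1)
      = fderiv ℝ F (t, Y iN, Y i1, u) (0, 0, 1, 0) :=
    (euler_heun_slice3 f hFd t (Y iN) (Y i1) u).deriv
  set pb : ℝ := fderiv ℝ F (t, Y iN, Y i1, u) (0, 0, 1, 0) with hpbdef
  rw [e1] at hder
  -- continuity of the second factor in h
  set g : ℝ → ℝ := fun h => 1 + h * (fderiv ℝ F
    (t + h, Y iN + h * f t (Y iN) (Y i1) u, Y i2, u) ((0 : ℝ), (1 : ℝ), (0 : ℝ), (0 : ℝ)))
    with hgdef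
  have hgc : Continuous g := by
    have hc1 : Continuous fun h : ℝ =>
        ((t + h, Y iN + h * f t (Y iN) (Y i1) u, Y i2, u) : ℝ × ℝ × ℝ × ℝ) := by
      fun_prop
    have hc2 : Continuous (fderiv ℝ F) := hf.continuous_fderiv (by simp)
    exact continuous_const.add (continuous_id.mul
      (((hc2.comp hc1).clm_apply continuous_const)))
  have hg0 : g 0 ≠ 0 := by simp [hgdef]
  have hev : ∀ᶠ h in nhds (0 : ℝ), g h ≠ 0 :=
    (hgc.continuousAt).eventually_ne hg0
  obtain ⟨h₀, h₀pos, hh₀⟩ := Metric.eventually_nhds_iff.mp hev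
  refine ⟨h₀, h₀pos, fun h hpos hlt => ?_⟩
  rw [part1 h Y]
  have e2 : deriv (fun z => f (t + h) z (Y i2) u)
      (Y iN + h * f t (Y iN) (Y i1) u)
      = fderiv ℝ F (t + h, Y iN + h * f t (Y iN) (Y i1) u, Y i2, u)
        ((0 : ℝ), (1 : ℝ), (0 : ℝ), (0 : ℝ)) :=
    (euler_heun_slice2 f hFd (t + h) (Y iN + h * f t (Y iN) (Y i1) u) (Y i2) u).deriv
  have hgh : g h ≠ 0 := hh₀ (by simp [abs_of_pos hpos, hlt, Real.dist_eq])
  have hE : E h Y = h / 2 * pb * g h := by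
    simp only [E, e1, e2, hgdef]
  rw [hE]
  exact mul_ne_zero (mul_ne_zero (by positivity) hder) hgh
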